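/- arXiv:1604.00039 — 3 statements merged into one kernel-verified Lean document; each statement's English description precedes it below -/
import Mathlib

section
/- Let K : ℝ → ℝ be a measurable kernel with ∫ K = 1 and compact support in [-1,1], of order m, i.e. ∫ K(x) x^ℓ dx = 0 for all 1 ≤ ℓ ≤ m. Let f : ℝ → ℝ be m_s times differentiable with |f^{(m_s)}(x) − f^{(m_s)}(y)| ≤ L|x−y|^{s−m_s} for all x, y, where m_s ≤ m and m_s = sup{k ∈ ℕ : k < s}. Then for every h ∈ (0,1] and every x₀ ∈ ℝ, |∫ K_h(x₀ − y) f(y) dy − f(x₀)| ≤ C h^s, where K_h(u) = h⁻¹ K(u/h) and C is a constant depending only on s, L and K (one may take C = L ∫ |K(u)| |u|^s du / (m_s)!). -/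
open MeasureTheory Real Set Finset Nat

/-!
After the substitution `y = x₀ - h u` the smoothed value is `∫ K(u) f(x₀ - h u) du`. A kernel of
order `m ≥ mₛ` reproduces polynomials of degree `≤ mₛ` at `x₀`, in particular the Taylor polynomial
`T` of `f` of degree `mₛ` at `x₀`, so the bias is `∫ K(u) (f - T)(x₀ - h u) du`. By Taylor's theorem
with Lagrange remainder, `(f - T)(x) = (f⁽ᵐˢ⁾(ξ) - f⁽ᵐˢ⁾(x₀)) (x - x₀)^mₛ / mₛ!`, which the Hölder
condition bounds by `L |x - x₀|^s / mₛ!`; at `x = x₀ - h u` this is `L hˢ |u|ˢ / mₛ!`.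
-/

theorem continuous_taylorWithinEval {E : Type*} [NormedAddCommGroup E] [NormedSpace ℝ E]
    (f : ℝ → E) (n : ℕ) (s : Set ℝ) (x₀ : ℝ) : Continuous (taylorWithinEval f n s x₀) := by
  rw [funext (taylor_within_apply f n s x₀)]
  fun_prop

section Taylor

variable {f : ℝ → ℝ} {n : ℕ}

theorem ContDiff.taylorWithinEval_eq_univ {s : Set ℝ} (hf : ContDiff ℝ n f)
    (hs : UniqueDiffOn ℝ s) {x₀ : ℝ} (hx₀ : x₀ ∈ s) (x : ℝ) :
    taylorWithinEval f n s x₀ x = taylorWithinEval f n univ x₀ x := by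
  simp only [taylor_within_apply, iteratedDerivWithin_univ]
  refine Finset.sum_congr rfl fun k hk => ?_
  rw [iteratedDerivWithin_eq_iteratedDeriv hs (hf.contDiffAt.of_le ?_) hx₀]
  exact_mod_cast Nat.lt_succ_iff.mp (Finset.mem_range.mp hk)

theorem abs_sub_taylorWithinEval_le (hf : ContDiff ℝ n f) {x₀ x M : ℝ}
    (hM : ∀ y ∈ uIcc x₀ x, |iteratedDeriv n f y - iteratedDeriv n f x₀| ≤ M) :
    |f x - taylorWithinEval f n univ x₀ x| ≤ M * |x - x₀| ^ n / n ! := by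
  rcases n with _ | n
  · simpa using hM x right_mem_uIcc
  rcases eq_or_ne x₀ x with rfl | hx
  · have hM0 : 0 ≤ M := (abs_nonneg _).trans (hM x₀ left_mem_uIcc)
    simp only [taylorWithinEval_self, sub_self, abs_zero]
    positivity
  obtain ⟨ξ, hξ, hrem⟩ := taylor_mean_remainder_lagrange_iteratedDeriv hx hf.contDiffOn
  rw [hf.of_succ.taylorWithinEval_eq_univ (uniqueDiffOn_uIcc hx) left_mem_uIcc] at hrem
  calc |f x - taylorWithinEval f (n + 1) univ x₀ x|
      = |iteratedDeriv (n + 1) f ξ - iteratedDeriv (n + 1) f x₀| * |x - x₀| ^ (n + 1)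
          / (n + 1)! := by
        rw [← abs_pow, ← abs_mul, ← Nat.abs_cast, ← abs_div, taylorWithinEval_succ,
          iteratedDerivWithin_univ, ← sub_sub, hrem, smul_eq_mul, Nat.factorial_succ]
        push_cast
        ring_nf
    _ ≤ M * |x - x₀| ^ (n + 1) / (n + 1)! := by
        gcongr
        exact hM ξ (uIoo_subset_uIcc_self hξ)

theorem abs_sub_taylorWithinEval_le_of_holder (hf : ContDiff ℝ n f) {L s : ℝ} (hL : 0 ≤ L)
    (hns : (n : ℝ) ≤ s)
    (hH : ∀ x y, |iteratedDeriv n f x - iteratedDeriv n f y| ≤ L * |x - y| ^ (s - n))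
    (x₀ x : ℝ) : |f x - taylorWithinEval f n univ x₀ x| ≤ L * |x - x₀| ^ s / n ! := by
  refine (abs_sub_taylorWithinEval_le hf (M := L * |x - x₀| ^ (s - n)) fun y hy =>
    (hH y x₀).trans ?_).trans_eq ?_
  · exact mul_le_mul_of_nonneg_left
      (rpow_le_rpow (abs_nonneg _) (abs_sub_left_of_mem_uIcc hy) (by linarith)) hL
  · rw [mul_assoc, ← rpow_natCast,
      ← rpow_add_of_nonneg (abs_nonneg _) (by linarith) n.cast_nonneg, sub_add_cancel]

end Taylor

theorem MeasureTheory.Integrable.mul_continuousOn_of_support_subset {X R : Type*}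
    [TopologicalSpace X] [T2Space X] [MeasurableSpace X] [OpensMeasurableSpace X]
    {μ : Measure X} [NormedRing R] [SecondCountableTopologyEither X R] {K g : X → R} {s : Set X} (hK : Integrable K μ)
    (hKs : Function.support K ⊆ s) (hs : IsCompact s) (hg : ContinuousOn g s) :
    Integrable (fun x => K x * g x) μ :=
  (integrableOn_iff_integrable_of_support_subset
    ((Function.support_mul_subset_left K g).trans hKs)).1 (hK.integrableOn.mul_continuousOn hg hs)

theorem abs_integral_mul_le_of_abs_le {α : Type*} [MeasurableSpace α] {μ : Measure α}
    {K r w : α → ℝ} {C : ℝ} (hint : Integrable (fun u => |K u| * w u) μ)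
    (hr : ∀ u, |r u| ≤ C * w u) : |∫ u, K u * r u ∂μ| ≤ C * ∫ u, |K u| * w u ∂μ := by
  rw [← integral_const_mul C]
  refine norm_integral_le_of_norm_le (G := ℝ) (hint.const_mul C) (.of_forall fun u => ?_)
  rw [norm_mul, Real.norm_eq_abs, Real.norm_eq_abs]
  exact (mul_le_mul_of_nonneg_left (hr u) (abs_nonneg _)).trans_eq (by ring)

theorem integral_mul_sum_pow_of_moments {K : ℝ → ℝ} {n : ℕ}
    (hK : ∀ k, Integrable (fun u => K u * u ^ k)) (hK_int : ∫ u, K u = 1)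
    (hK_order : ∀ ℓ : ℕ, 1 ≤ ℓ → ℓ ≤ n → ∫ u, K u * u ^ ℓ = 0) (c : ℕ → ℝ) :
    ∫ u, K u * ∑ k ∈ range (n + 1), c k * u ^ k = c 0 := by
  simp_rw [Finset.mul_sum, mul_left_comm (K _)]
  rw [integral_finsetSum _ fun k _ => (hK k).const_mul (c k)]
  simp_rw [integral_const_mul]
  rw [Finset.sum_range_succ', Finset.sum_eq_zero fun k hk => ?_]
  · simp [hK_int]
  · rw [hK_order (k + 1) (by omega) (by simpa using hk), mul_zero]

theorem integral_mul_taylorWithinEval_comp {K : ℝ → ℝ} {n : ℕ}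
    (hK : ∀ k, Integrable (fun u => K u * u ^ k)) (hK_int : ∫ u, K u = 1)
    (hK_order : ∀ ℓ : ℕ, 1 ≤ ℓ → ℓ ≤ n → ∫ u, K u * u ^ ℓ = 0) (f : ℝ → ℝ) (x₀ h : ℝ) :
    ∫ u, K u * taylorWithinEval f n univ x₀ (x₀ - h * u) = f x₀ := by
  have hT : ∀ u, taylorWithinEval f n univ x₀ (x₀ - h * u) =
      ∑ k ∈ range (n + 1), ((-h) ^ k / k ! * iteratedDeriv k f x₀) * u ^ k := fun u => by
    rw [taylor_within_apply]
    refine Finset.sum_congr rfl fun k _ => ?_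
    rw [iteratedDerivWithin_univ, smul_eq_mul, show x₀ - h * u - x₀ = -h * u by ring, mul_pow]
    ring
  simp_rw [hT]
  rw [integral_mul_sum_pow_of_moments hK hK_int hK_order]
  simp

theorem integral_rescaled_kernel_mul (K f : ℝ → ℝ) {h : ℝ} (hh : 0 < h) (x₀ : ℝ) :
    ∫ y, h⁻¹ * K ((x₀ - y) / h) * f y = ∫ u, K u * f (x₀ - h * u) := by
  set G := fun u => K u * f (x₀ - h * u)
  have hG (y : ℝ) : h⁻¹ * K ((x₀ - y) / h) * f y = h⁻¹ * G ((x₀ - y) / h) := by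
    simp only [G, mul_div_cancel₀ _ hh.ne', sub_sub_cancel, mul_assoc]
  simp_rw [hG]
  rw [integral_const_mul, integral_sub_left_eq_self (fun z => G (z / h)),
    Measure.integral_comp_div G h, abs_of_pos hh, smul_eq_mul, inv_mul_cancel_left₀ hh.ne']

theorem kernel_bias_bound_general
    (K f : ℝ → ℝ) (m ms : ℕ) (s L : ℝ) (hL : 0 < L)
    (hK_int : ∫ x, K x = 1)
    (hK_supp : Function.support K ⊆ Set.Icc (-1 : ℝ) 1)
    (hK_order : ∀ ℓ : ℕ, 1 ≤ ℓ → ℓ ≤ m → ∫ x, K x * x ^ ℓ = 0)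
    (hms : (ms : ℝ) < s)
    (hmsm : ms ≤ m)
    (hf : ContDiff ℝ ms f)
    (hHolder : ∀ x y : ℝ, |iteratedDeriv ms f x - iteratedDeriv ms f y| ≤ L * |x - y| ^ (s - ms)) :
    ∀ h : ℝ, h ∈ Set.Ioc (0 : ℝ) 1 → ∀ x₀ : ℝ,
      |(∫ y, h⁻¹ * K ((x₀ - y) / h) * f y) - f x₀| ≤
        (L * (∫ u, |K u| * |u| ^ s) / (Nat.factorial ms)) * h ^ s := by
  rintro h ⟨hh, -⟩ x₀
  have hs : 0 ≤ s := ms.cast_nonneg.trans hms.le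
  have hKint : Integrable K := .of_integral_ne_zero (by simp [hK_int])
  have hKg {g : ℝ → ℝ} (hg : Continuous g) : Integrable fun u => K u * g u :=
    hKint.mul_continuousOn_of_support_subset hK_supp isCompact_Icc hg.continuousOn
  set T := taylorWithinEval f ms univ x₀
  have hTK : ∫ u, K u * T (x₀ - h * u) = f x₀ :=
    integral_mul_taylorWithinEval_comp (fun k => hKg (continuous_pow k)) hK_int
      (fun ℓ h1 h2 => hK_order ℓ h1 (h2.trans hmsm)) f x₀ h
  have hrem (u : ℝ) : |f (x₀ - h * u) - T (x₀ - h * u)| ≤ L * h ^ s / ms ! * |u| ^ s := by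
    refine (abs_sub_taylorWithinEval_le_of_holder hf hL.le hms.le hHolder x₀ _).trans_eq ?_
    rw [show x₀ - h * u - x₀ = -h * u by ring, abs_mul, abs_neg, abs_of_pos hh,
      mul_rpow hh.le (abs_nonneg u)]
    ring
  have hKs : Integrable fun u => |K u| * |u| ^ s :=
    hKint.abs.mul_continuousOn_of_support_subset (fun u hu => hK_supp (by simpa using hu))
      isCompact_Icc (continuous_abs.rpow_const fun _ => Or.inr hs).continuousOn
  have hKg_comp {g : ℝ → ℝ} (hg : Continuous g) : Integrable fun u => K u * g (x₀ - h * u) :=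
    hKg (hg.comp (by fun_prop))
  rw [integral_rescaled_kernel_mul K f hh, ← hTK, ← integral_sub (hKg_comp hf.continuous)
    (hKg_comp (continuous_taylorWithinEval f ms univ x₀))]
  simp_rw [← mul_sub]
  calc _ ≤ L * h ^ s / ms ! * ∫ u, |K u| * |u| ^ s := abs_integral_mul_le_of_abs_le hKs hrem
    _ = _ := by ring

/-- Classical bias bound for kernel smoothing with a kernel of order `m`. -/
theorem kernel_bias_bound
    (K f : ℝ → ℝ) (m ms : ℕ) (s L : ℝ) (hs : 0 < s) (hL : 0 < L)
    (hK_meas : Measurable K)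
    (hK_int : ∫ x, K x = 1)
    (hK_supp : Function.support K ⊆ Set.Icc (-1 : ℝ) 1)
    (hK_order : ∀ ℓ : ℕ, 1 ≤ ℓ → ℓ ≤ m → ∫ x, K x * x ^ ℓ = 0)
    (hms : (ms : ℝ) < s) (hms' : s ≤ ms + 1)   -- ms = sup {k ∈ ℕ : k < s}
    (hmsm : ms ≤ m)
    (hf : ContDiff ℝ ms f)
    (hHolder : ∀ x y : ℝ, |iteratedDeriv ms f x - iteratedDeriv ms f y| ≤ L * |x - y| ^ (s - ms)) :
    ∀ h : ℝ, h ∈ Set.Ioc (0 : ℝ) 1 → ∀ x₀ : ℝ,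
      |(∫ y, h⁻¹ * K ((x₀ - y) / h) * f y) - f x₀| ≤
        (L * (∫ u, |K u| * |u| ^ s) / (Nat.factorial ms)) * h ^ s :=
  kernel_bias_bound_general K f m ms s L hL hK_int hK_supp hK_order hms hmsm hf hHolder
end

section
/- Let a, b, c > 0 and suppose a nonnegative sequence (ρ_r)_{r≥1} satisfies ρ_r ≤ c·exp(−a r^b) for all r ≥ 1. Then for every k ∈ ℕ the series Σ_{r≥0} (1+r)^k ρ_r^{1/4} converges, and there exist constants L₁, L₂ > 0 depending only on a, b, c such that Σ_{r≥0} (1+r)^k ρ_r^{1/4} ≤ L₁ L₂^k (k!)^{1/b} for all k ∈ ℕ. -/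
/-!
Taking `b`-th roots in `z ^ k ≤ k ! * exp z` at `z = β b x ^ b` gives
`x ^ k ≤ (β b) ^ (-k / b) * (k !) ^ (1 / b) * exp (β x ^ b)`: a polynomial weight costs a
factor `L ^ k * (k !) ^ (1 / b)` against a stretched exponential. With `β = a / 8` we have
`ρ r ^ (1 / 4) ≤ c ^ (1 / 4) * exp (-β r ^ b) ^ 2`; one factor `exp (-β r ^ b)` absorbs
`(1 + r) ^ k`, the other is summable.
-/

open Real
open scoped Nat

lemma pow_le_mul_factorial_rpow_mul_exp {x β b : ℝ} (hx : 0 ≤ x) (hβ : 0 < β) (hb : 0 < b)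
    (k : ℕ) :
    x ^ k ≤ ((β * b) ^ (-b⁻¹)) ^ k * (k ! : ℝ) ^ b⁻¹ * exp (β * x ^ b) := by
  have hβb : 0 < β * b := mul_pos hβ hb
  have hpow : (x ^ b) ^ k ≤ ((β * b) ^ k)⁻¹ * (k ! * exp (β * b * x ^ b)) := by
    have := pow_div_factorial_le_exp (x := β * b * x ^ b) (by positivity) k
    rw [div_le_iff₀ (by positivity), mul_pow] at this
    rw [le_inv_mul_iff₀ (by positivity)]
    linarith
  calc x ^ k = ((x ^ b) ^ k) ^ b⁻¹ := by
        rw [← rpow_natCast (x ^ b), ← rpow_mul hx, ← rpow_mul hx, mul_comm b, mul_assoc,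
          mul_inv_cancel₀ hb.ne', mul_one, rpow_natCast]
    _ ≤ (((β * b) ^ k)⁻¹ * (k ! * exp (β * b * x ^ b))) ^ b⁻¹ := by gcongr
    _ = ((β * b) ^ (-b⁻¹)) ^ k * (k ! : ℝ) ^ b⁻¹ * exp (β * x ^ b) := by
        rw [mul_rpow (by positivity) (by positivity), mul_rpow (by positivity) (by positivity),
          inv_rpow (by positivity), ← rpow_natCast, ← rpow_mul hβb.le, ← rpow_natCast,
          ← rpow_mul hβb.le, neg_mul, rpow_neg hβb.le, ← exp_mul, mul_comm (k : ℝ)]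
        field_simp

lemma one_add_pow_le_mul_factorial_rpow_mul_exp {x β b : ℝ} (hx : 0 ≤ x) (hβ : 0 < β)
    (hb : 0 < b) (k : ℕ) :
    (1 + x) ^ k ≤
      2 * (2 * (1 + (β * b) ^ (-b⁻¹))) ^ k * (k ! : ℝ) ^ b⁻¹ * exp (β * x ^ b) := by
  set K := (β * b) ^ (-b⁻¹)
  have hK : 0 ≤ K := by positivity
  have hone : 1 ≤ (k ! : ℝ) ^ b⁻¹ * exp (β * x ^ b) :=
    one_le_mul_of_one_le_of_one_le (one_le_rpow (mod_cast k.factorial_pos) (by positivity))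
      (one_le_exp (by positivity))
  have hK1 : 1 + K ^ k ≤ 2 * (1 + K) ^ k := by
    have h1 : 1 ≤ (1 + K) ^ k := one_le_pow₀ (by linarith)
    have h2 : K ^ k ≤ (1 + K) ^ k := pow_le_pow_left₀ hK (by linarith) k
    linarith
  calc (1 + x) ^ k ≤ 2 ^ k * (1 + x ^ k) := by
        have := add_pow_le zero_le_one hx k
        rw [one_pow] at this
        exact this.trans (by gcongr <;> simp)
    _ ≤ 2 ^ k * ((1 + K ^ k) * ((k ! : ℝ) ^ b⁻¹ * exp (β * x ^ b))) := by
        have := pow_le_mul_factorial_rpow_mul_exp hx hβ hb k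
        gcongr
        nlinarith
    _ ≤ 2 ^ k * (2 * (1 + K) ^ k * ((k ! : ℝ) ^ b⁻¹ * exp (β * x ^ b))) := by gcongr
    _ = 2 * (2 * (1 + K)) ^ k * (k ! : ℝ) ^ b⁻¹ * exp (β * x ^ b) := by rw [mul_pow]; ring

lemma summable_exp_neg_mul_rpow_natCast {β b : ℝ} (hβ : 0 < β) (hb : 0 < b) :
    Summable fun r : ℕ => exp (-β * (r : ℝ) ^ b) := by
  obtain ⟨M, hM⟩ : ∃ M, ∀ r : ℕ, ((r : ℝ) + 1) ^ 2 ≤ exp (β * (r : ℝ) ^ b) * M :=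
    ⟨_, fun r => by
      simpa only [add_comm _ (1 : ℝ), mul_comm (exp _)] using
        one_add_pow_le_mul_factorial_rpow_mul_exp (Nat.cast_nonneg r) hβ hb 2⟩
  have hbound (r : ℕ) : exp (-β * (r : ℝ) ^ b) ≤ M * (1 / ((r + 1 : ℕ) : ℝ) ^ 2) := by
    rw [mul_one_div, le_div_iff₀ (by positivity), neg_mul, exp_neg, Nat.cast_succ,
      inv_mul_le_iff₀ (exp_pos _)]
    exact hM r
  refine Summable.of_nonneg_of_le (fun r => (exp_pos _).le) hbound (Summable.mul_left _ ?_)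
  exact (summable_nat_add_iff 1).mpr (summable_one_div_nat_pow.mpr one_lt_two)

lemma summable_one_add_pow_mul_and_tsum_le {β b C : ℝ} (hβ : 0 < β) (hb : 0 < b) (hC : 0 ≤ C)
    {f : ℕ → ℝ} (hf_nonneg : ∀ r, 0 ≤ f r)
    (hf : ∀ r : ℕ, f r ≤ C * exp (-(2 * β) * (r : ℝ) ^ b)) (k : ℕ) :
    Summable (fun r : ℕ => (1 + (r : ℝ)) ^ k * f r) ∧
      ∑' r : ℕ, (1 + (r : ℝ)) ^ k * f r ≤
        2 * C * (∑' r : ℕ, exp (-β * (r : ℝ) ^ b)) * (2 * (1 + (β * b) ^ (-b⁻¹))) ^ k *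
          (k ! : ℝ) ^ (1 / b) := by
  set L := 2 * (1 + (β * b) ^ (-b⁻¹))
  set F : ℕ → ℝ := fun r => exp (-β * (r : ℝ) ^ b)
  have hF : Summable F := summable_exp_neg_mul_rpow_natCast hβ hb
  have hweight (r : ℕ) : (1 + (r : ℝ)) ^ k * F r ≤ 2 * L ^ k * (k ! : ℝ) ^ b⁻¹ := by
    simp only [F]
    rw [neg_mul, exp_neg, ← div_eq_mul_inv, div_le_iff₀ (exp_pos _)]
    exact one_add_pow_le_mul_factorial_rpow_mul_exp (Nat.cast_nonneg r) hβ hb k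
  have hterm (r : ℕ) :
      (1 + (r : ℝ)) ^ k * f r ≤ C * (2 * L ^ k * (k ! : ℝ) ^ b⁻¹) * F r :=
    calc (1 + (r : ℝ)) ^ k * f r ≤ (1 + (r : ℝ)) ^ k * (C * (F r * F r)) := by
          have hsq : F r * F r = exp (-(2 * β) * (r : ℝ) ^ b) := by
            simp only [F]
            rw [← exp_add]
            ring_nf
          rw [hsq]
          gcongr
          exact hf r
      _ = C * ((1 + (r : ℝ)) ^ k * F r) * F r := by ring
      _ ≤ C * (2 * L ^ k * (k ! : ℝ) ^ b⁻¹) * F r :=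
          mul_le_mul_of_nonneg_right (mul_le_mul_of_nonneg_left (hweight r) hC) (exp_pos _).le
  have hsum : Summable fun r : ℕ => (1 + (r : ℝ)) ^ k * f r :=
    (hF.mul_left _).of_nonneg_of_le (fun r => by have := hf_nonneg r; positivity) hterm
  refine ⟨hsum, ?_⟩
  calc ∑' r : ℕ, (1 + (r : ℝ)) ^ k * f r
        ≤ ∑' r, C * (2 * L ^ k * (k ! : ℝ) ^ b⁻¹) * F r :=
        hsum.tsum_le_tsum hterm (hF.mul_left _)
    _ = 2 * C * (∑' r, F r) * L ^ k * (k ! : ℝ) ^ (1 / b) := by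
        rw [tsum_mul_left, one_div b]; ring

/-- Summability estimate: geometric decay of `ρ_r` yields factorial-type bounds on
weighted sums `Σ (1+r)^k ρ_r^{1/4}`. -/
theorem weighted_sum_factorial_bound
    (a b c : ℝ) (ha : 0 < a) (hb : 0 < b) (hc : 0 < c)
    (ρ : ℕ → ℝ) (hρ_nonneg : ∀ r, 0 ≤ ρ r)
    (hρ : ∀ r : ℕ, ρ r ≤ c * Real.exp (-a * (r : ℝ) ^ b)) :
    (∀ k : ℕ, Summable (fun r : ℕ => (1 + (r : ℝ)) ^ k * ρ r ^ (1 / 4 : ℝ))) ∧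
      ∃ L₁ L₂ : ℝ, 0 < L₁ ∧ 0 < L₂ ∧ ∀ k : ℕ,
        ∑' r : ℕ, (1 + (r : ℝ)) ^ k * ρ r ^ (1 / 4 : ℝ) ≤
          L₁ * L₂ ^ k * (Nat.factorial k : ℝ) ^ (1 / b) := by
  have hβ : 0 < a / 8 := by positivity
  have hroot (r : ℕ) :
      ρ r ^ (1 / 4 : ℝ) ≤ c ^ (1 / 4 : ℝ) * exp (-(2 * (a / 8)) * (r : ℝ) ^ b) :=
    calc ρ r ^ (1 / 4 : ℝ) ≤ (c * exp (-a * (r : ℝ) ^ b)) ^ (1 / 4 : ℝ) :=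
          rpow_le_rpow (hρ_nonneg r) (hρ r) (by norm_num)
      _ = c ^ (1 / 4 : ℝ) * exp (-(2 * (a / 8)) * (r : ℝ) ^ b) := by
          rw [mul_rpow hc.le (exp_pos _).le, ← exp_mul]
          ring_nf
  have hmoments := summable_one_add_pow_mul_and_tsum_le hβ hb (by positivity)
    (fun r => rpow_nonneg (hρ_nonneg r) _) hroot
  have hF_pos : 0 < ∑' r : ℕ, exp (-(a / 8) * (r : ℝ) ^ b) :=
    (summable_exp_neg_mul_rpow_natCast hβ hb).tsum_pos (fun _ => (exp_pos _).le) 0 (exp_pos _)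
  exact ⟨fun k => (hmoments k).1, _, _, by positivity, by positivity,
    fun k => (hmoments k).2⟩
end

section
/- Let H be a finite set of positive reals, and for each h ∈ H let f̂_h, M(h) be real numbers with M(h) ≥ 0. Define A(h) = max_{𝔥 ∈ H} { |f̂_{h∨𝔥} − f̂_𝔥| − M(h∨𝔥) − M(𝔥) }₊ and let ĥ ∈ H minimize h ↦ A(h) + M(h) over H. Then for every h ∈ H and every real number f₀, |f̂_{ĥ} − f₀| ≤ 2A(h) + 2M(h) + |f̂_h − f₀|, where h∨𝔥 = max(h,𝔥) and {y}₊ = max(y,0). -/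
open Finset

/-!
Comparing two bandwidths through the larger of the two, `A` controls `|f̂_h - f̂_h'|` up to
the majorants: `|f̂_h - f̂_h'| ≤ A h + M h + A h' + M h'`. Applied to `h' = ĥ`, the minimality
of `A ĥ + M ĥ` and the triangle inequality through `f̂_h` give the oracle bound.
-/

namespace GoldenshlugerLepski

variable {ι : Type*} [LinearOrder ι] (H : Finset ι) (hne : H.Nonempty) (fhat M : ι → ℝ)

noncomputable def bias (h : ι) : ℝ :=
  H.sup' hne fun 𝔥 => max (|fhat (max h 𝔥) - fhat 𝔥| - M (max h 𝔥) - M 𝔥) 0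

variable {H fhat M}

lemma le_bias {h 𝔥 : ι} (h𝔥 : 𝔥 ∈ H) :
    max (|fhat (max h 𝔥) - fhat 𝔥| - M (max h 𝔥) - M 𝔥) 0 ≤ bias H hne fhat M h :=
  le_sup' (fun 𝔥 => max (|fhat (max h 𝔥) - fhat 𝔥| - M (max h 𝔥) - M 𝔥) 0) h𝔥

lemma bias_nonneg (h : ι) : 0 ≤ bias H hne fhat M h :=
  (le_max_right _ _).trans (le_bias hne hne.choose_spec)

lemma abs_sub_le_bias {h 𝔥 : ι} (h𝔥 : 𝔥 ∈ H) :
    |fhat (max h 𝔥) - fhat 𝔥| ≤ bias H hne fhat M h + M (max h 𝔥) + M 𝔥 := by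
  have : |fhat (max h 𝔥) - fhat 𝔥| - M (max h 𝔥) - M 𝔥 ≤ bias H hne fhat M h :=
    (le_max_left _ _).trans (le_bias hne h𝔥)
  linarith

lemma abs_sub_le_of_le {h h' : ι} (hh' : h' ≤ h) (h'_mem : h' ∈ H) :
    |fhat h - fhat h'| ≤ bias H hne fhat M h + M h + M h' := by
  simpa only [max_eq_left hh'] using abs_sub_le_bias hne (h := h) h'_mem

lemma abs_sub_le_bias_add {h h' : ι} (h_mem : h ∈ H) (h'_mem : h' ∈ H) :
    |fhat h - fhat h'| ≤ (bias H hne fhat M h + M h) + (bias H hne fhat M h' + M h') := by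
  have hA : 0 ≤ bias H hne fhat M h := bias_nonneg hne h
  have hA' : 0 ≤ bias H hne fhat M h' := bias_nonneg hne h'
  rcases le_total h' h with hh' | hh'
  · linarith [abs_sub_le_of_le hne (fhat := fhat) (M := M) hh' h'_mem]
  · rw [abs_sub_comm]
    linarith [abs_sub_le_of_le hne (fhat := fhat) (M := M) hh' h_mem]

end GoldenshlugerLepski

open GoldenshlugerLepski in
theorem goldenshluger_lepski_deterministic_general
    (H : Finset ℝ) (hne : H.Nonempty)
    (fhat M : ℝ → ℝ)
    (A : ℝ → ℝ)
    (hA : ∀ h, A h = H.sup' hne fun 𝔥 =>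
      max (|fhat (max h 𝔥) - fhat 𝔥| - M (max h 𝔥) - M 𝔥) 0)
    (hhat : ℝ) (hhat_mem : hhat ∈ H)
    (hhat_min : ∀ h ∈ H, A hhat + M hhat ≤ A h + M h) :
    ∀ h ∈ H, ∀ f₀ : ℝ, |fhat hhat - f₀| ≤ 2 * A h + 2 * M h + |fhat h - f₀| := by
  obtain rfl : A = bias H hne fhat M := funext hA
  intro h h_mem f₀
  calc |fhat hhat - f₀| ≤ |fhat hhat - fhat h| + |fhat h - f₀| := abs_sub_le _ _ _
    _ ≤ (bias H hne fhat M hhat + M hhat) + (bias H hne fhat M h + M h) + |fhat h - f₀| := by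
        gcongr; exact abs_sub_le_bias_add hne hhat_mem h_mem
    _ ≤ 2 * bias H hne fhat M h + 2 * M h + |fhat h - f₀| := by linarith [hhat_min h h_mem]

/-- Deterministic core of the Goldenshluger–Lepski bandwidth selection argument. -/
theorem goldenshluger_lepski_deterministic
    (H : Finset ℝ) (hne : H.Nonempty) (hpos : ∀ h ∈ H, 0 < h)
    (fhat M : ℝ → ℝ) (hM : ∀ h ∈ H, 0 ≤ M h)
    (A : ℝ → ℝ)
    (hA : ∀ h, A h = H.sup' hne fun 𝔥 =>
      max (|fhat (max h 𝔥) - fhat 𝔥| - M (max h 𝔥) - M 𝔥) 0)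
    (hhat : ℝ) (hhat_mem : hhat ∈ H)
    (hhat_min : ∀ h ∈ H, A hhat + M hhat ≤ A h + M h) :
    ∀ h ∈ H, ∀ f₀ : ℝ, |fhat hhat - f₀| ≤ 2 * A h + 2 * M h + |fhat h - f₀| :=
  goldenshluger_lepski_deterministic_general H hne fhat M A hA hhat hhat_mem hhat_min
end
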